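/- Let ℓ ∈ ℤ≥0 and assume θ₁(2jη|τ) ≠ 0 for 1 ≤ j ≤ 2ℓ. Then the one-site transfer matrix T(λ) and the Q-operator Q(λ) satisfy Baxter's T-Q relation: for every function f : ℂ → ℂ, every λ ∈ ℂ, and every z at which all theta factors appearing in denominators on both sides are nonzero, (T(λ)(Q(λ)f))(z) = θ₁(2λ−2ℓη|τ)·(Q(λ+η)f)(z) + θ₁(2λ+2ℓη|τ)·(Q(λ−η)f)(z). -/

import Mathlib

/-- Jacobi theta function `θ_a(z|τ)` for `a = 1,2,3,4`. -/
noncomputable def jTheta (a : ℕ) (z τ : ℂ) : ℂ :=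
  match a with
  | 1 => -∑' k : ℤ, Complex.exp ((Real.pi : ℂ) * Complex.I * τ * ((k : ℂ) + 1/2)^2
          + 2 * (Real.pi : ℂ) * Complex.I * (z + 1/2) * ((k : ℂ) + 1/2))
  | 2 => ∑' k : ℤ, Complex.exp ((Real.pi : ℂ) * Complex.I * τ * ((k : ℂ) + 1/2)^2
          + 2 * (Real.pi : ℂ) * Complex.I * z * ((k : ℂ) + 1/2))
  | 3 => ∑' k : ℤ, Complex.exp ((Real.pi : ℂ) * Complex.I * τ * (k : ℂ)^2
          + 2 * (Real.pi : ℂ) * Complex.I * z * (k : ℂ))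
  | 4 => ∑' k : ℤ, Complex.exp ((Real.pi : ℂ) * Complex.I * τ * (k : ℂ)^2
          + 2 * (Real.pi : ℂ) * Complex.I * (z + 1/2) * (k : ℂ))
  | _ => 0

/-- Elliptic factorial `[n]! = ∏_{j=1}^{n} θ₁(2jη|τ)`. -/
noncomputable def efac (τ η : ℂ) (n : ℕ) : ℂ :=
  ∏ j ∈ Finset.range n, jTheta 1 (2*((j : ℂ) + 1)*η) τ

/-- Elliptic binomial coefficient `[n choose m] = [n]!/([m]![n−m]!)`. -/
noncomputable def ebinom (τ η : ℂ) (n m : ℕ) : ℂ :=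
  efac τ η n / (efac τ η m * efac τ η (n - m))

/-- The coefficient `A_k(z,λ)` of the one-site Q-operator (spin `ℓ ∈ ℤ≥0`). -/
noncomputable def Acoef (τ η : ℂ) (ℓ k : ℕ) (z lam : ℂ) : ℂ :=
  (-1 : ℂ)^k * (efac τ η ℓ / efac τ η (2*ℓ)) * ebinom τ η ℓ k *
  (∏ j ∈ Finset.range (ℓ - k),
    jTheta 1 (2*z + 2*((ℓ : ℂ) - (j : ℂ))*η) τ * jTheta 1 (2*lam + 2*((ℓ : ℂ) - (j : ℂ))*η) τ /
      jTheta 1 (2*z + 2*lam + 2*((k : ℂ) - (j : ℂ))*η) τ) *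
  (∏ j ∈ Finset.range k,
    jTheta 1 (2*z - 2*((ℓ : ℂ) - (j : ℂ))*η) τ * jTheta 1 (2*lam - 2*((ℓ : ℂ) - (j : ℂ))*η) τ /
      jTheta 1 (2*z + 2*lam + 2*((k : ℂ) + (j : ℂ) - (ℓ : ℂ))*η) τ)

/-- The one-site Q-operator `(Q(λ)f)(z) = ∑_{k=0}^{ℓ} A_k(z,λ)·f(z+(2k−ℓ)η+λ)`. -/
noncomputable def Qop (τ η : ℂ) (ℓ : ℕ) (lam : ℂ) (f : ℂ → ℂ) (z : ℂ) : ℂ :=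
  ∑ k ∈ Finset.range (ℓ+1), Acoef τ η ℓ k z lam * f (z + (2*(k : ℂ) - (ℓ : ℂ))*η + lam)

/-- The one-site (`N = 1`) transfer matrix
`(T(λ)f)(z) = θ₁(2λ)·[θ₁(2z−2ℓη)f(z+η) + θ₁(2z+2ℓη)f(z−η)]/θ₁(2z)`. -/
noncomputable def TopOne (τ η : ℂ) (ℓ : ℕ) (lam : ℂ) (f : ℂ → ℂ) (z : ℂ) : ℂ :=
  jTheta 1 (2*lam) τ *
    (jTheta 1 (2*z - 2*(ℓ : ℂ)*η) τ * f (z + η) + jTheta 1 (2*z + 2*(ℓ : ℂ)*η) τ * f (z - η)) /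
    jTheta 1 (2*z) τ

/-! Both sides of the T-Q relation are combinations of the values `f (z + λ + (2p - 1 - ℓ)η)`,
`0 ≤ p ≤ ℓ + 1`, and the relation is checked coefficient by coefficient. Writing
`A_k(z, λ) = (-1)^k c_k N_k(z) N_k(λ) / D_k(z + λ)` shows that `A_k` is symmetric in `z` and `λ`,
so each coefficient identity says that
`θ₁(2λ) [θ₁(2z - 2ℓη) A_k(z + η, λ) + θ₁(2z + 2ℓη) A_{k+1}(z - η, λ)]` is symmetric in `z, λ`.
At the two ends this is immediate. In between, after cancelling the theta factors common to
`A_k` and `A_{k+1}`, the antisymmetric part is a combination of two instances of a three-term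
theta identity, and it vanishes because `[k + 1] [ℓ choose k + 1] = [ℓ - k] [ℓ choose k]`.
The three-term identity follows from the product formula
`θ₁(u) θ₁(v) = θ₃(u + v | 2τ) θ₂(u - v | 2τ) - θ₂(u + v | 2τ) θ₃(u - v | 2τ)`. -/

open Complex Finset
open scoped Real

noncomputable def thetaTerm (c μ τ : ℂ) (k : ℤ) : ℂ :=
  exp (π * I * τ * ((k : ℂ) + c) ^ 2 + μ * ((k : ℂ) + c))

lemma thetaTerm_eq (c μ τ : ℂ) (k : ℤ) :
    thetaTerm c μ τ k = exp (π * I * τ * c ^ 2 + μ * c) *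
      jacobiTheta₂_term k (τ * c + μ / (2 * π * I)) τ := by
  rw [thetaTerm, jacobiTheta₂_term, ← exp_add]
  congr 1
  have hπ : (π : ℂ) ≠ 0 := ofReal_ne_zero.mpr Real.pi_ne_zero
  field_simp
  ring

lemma summable_norm_thetaTerm (c μ : ℂ) {τ : ℂ} (hτ : 0 < τ.im) :
    Summable fun k => ‖thetaTerm c μ τ k‖ := by
  simp_rw [thetaTerm_eq, norm_mul]
  refine .mul_left _ (.of_nonneg_of_le (fun _ => norm_nonneg _)
    (fun n => norm_jacobiTheta₂_term_le hτ le_rfl le_rfl n) ?_)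
  simpa using summable_pow_mul_jacobiTheta₂_term_bound _ hτ 0

lemma jTheta_one_eq (z τ : ℂ) :
    jTheta 1 z τ = -∑' k, thetaTerm (1/2) (2 * π * I * (z + 1/2)) τ k := rfl

lemma jTheta_two_eq (z τ : ℂ) :
    jTheta 2 z τ = ∑' k, thetaTerm (1/2) (2 * π * I * z) τ k := rfl

lemma jTheta_three_eq (z τ : ℂ) :
    jTheta 3 z τ = ∑' k, thetaTerm 0 (2 * π * I * z) τ k :=
  tsum_congr fun k => congrArg exp (by ring)

lemma hasSum_mul_of_summable_norm {f g : ℤ → ℂ} (hf : Summable fun k => ‖f k‖)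
    (hg : Summable fun k => ‖g k‖) :
    HasSum (fun p : ℤ × ℤ => f p.1 * g p.2) ((∑' k, f k) * ∑' k, g k) := by
  rw [tsum_mul_tsum_of_summable_norm hf hg]
  exact (summable_mul_of_summable_norm hf hg).hasSum

def evenSumEquiv : ℤ × ℤ ≃ {p : ℤ × ℤ | Even (p.1 + p.2)} where
  toFun q := ⟨(q.1 + q.2, q.1 - q.2), q.1, by ring⟩
  invFun p := ((p.1.1 + p.1.2) / 2, (p.1.1 - p.1.2) / 2)
  left_inv q := by ext <;> dsimp <;> omega
  right_inv := by
    rintro ⟨⟨k, l⟩, r, hr⟩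
    ext <;> dsimp at hr ⊢ <;> omega

def oddSumEquiv : ℤ × ℤ ≃ ({p : ℤ × ℤ | Even (p.1 + p.2)}ᶜ : Set (ℤ × ℤ)) where
  toFun q := ⟨(q.1 + q.2, q.1 - q.2 - 1), by
    simp only [Set.mem_compl_iff, Set.mem_ofPred_eq, Int.even_iff]; omega⟩
  invFun p := ((p.1.1 + p.1.2 + 1) / 2, (p.1.1 - p.1.2 - 1) / 2)
  left_inv q := by ext <;> dsimp <;> omega
  right_inv := by
    rintro ⟨⟨k, l⟩, hr⟩
    simp only [Set.mem_compl_iff, Set.mem_ofPred_eq, Int.even_iff] at hr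
    ext <;> dsimp <;> omega

lemma thetaTerm_mul_thetaTerm_odd (τ u v : ℂ) (m n : ℤ) :
    thetaTerm (1/2) (2 * π * I * (u + 1/2)) τ (m + n)
        * thetaTerm (1/2) (2 * π * I * (v + 1/2)) τ (m - n - 1)
      = thetaTerm 0 (2 * π * I * (u + v)) (2 * τ) m
        * thetaTerm (1/2) (2 * π * I * (u - v)) (2 * τ) n := by
  simp only [thetaTerm, ← exp_add]
  rw [exp_eq_exp_iff_exists_int]
  exact ⟨m, by push_cast; ring⟩

lemma thetaTerm_mul_thetaTerm_even (τ u v : ℂ) (m n : ℤ) :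
    thetaTerm (1/2) (2 * π * I * (u + 1/2)) τ (m + n)
        * thetaTerm (1/2) (2 * π * I * (v + 1/2)) τ (m - n)
      = -(thetaTerm (1/2) (2 * π * I * (u + v)) (2 * τ) m
        * thetaTerm 0 (2 * π * I * (u - v)) (2 * τ) n) := by
  simp only [thetaTerm, ← exp_add]
  rw [← exp_add_pi_mul_I, exp_eq_exp_iff_exists_int]
  exact ⟨m, by push_cast; ring⟩

/-- Split the double series of the product according to the parity of `k + l`. -/
theorem jTheta_one_mul_jTheta_one {τ : ℂ} (hτ : 0 < τ.im) (u v : ℂ) :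
    jTheta 1 u τ * jTheta 1 v τ =
      jTheta 3 (u + v) (2 * τ) * jTheta 2 (u - v) (2 * τ)
        - jTheta 2 (u + v) (2 * τ) * jTheta 3 (u - v) (2 * τ) := by
  have hτ2 : 0 < (2 * τ).im := by simpa using hτ
  let F : ℤ × ℤ → ℂ := fun p => thetaTerm (1/2) (2 * π * I * (u + 1/2)) τ p.1
    * thetaTerm (1/2) (2 * π * I * (v + 1/2)) τ p.2
  have hprod : HasSum F _ :=
    hasSum_mul_of_summable_norm (summable_norm_thetaTerm _ _ hτ) (summable_norm_thetaTerm _ _ hτ)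
  have heven : HasSum (fun p : {p : ℤ × ℤ | Even (p.1 + p.2)} => F p) _ :=
    evenSumEquiv.hasSum_iff.mp <| (hasSum_mul_of_summable_norm
      (summable_norm_thetaTerm (1/2) (2 * π * I * (u + v)) hτ2)
      (summable_norm_thetaTerm 0 (2 * π * I * (u - v)) hτ2)).neg.congr_fun
      fun q => thetaTerm_mul_thetaTerm_even τ u v q.1 q.2
  have hodd : HasSum (fun p : ({p : ℤ × ℤ | Even (p.1 + p.2)}ᶜ : Set _) => F p) _ :=
    oddSumEquiv.hasSum_iff.mp <| (hasSum_mul_of_summable_norm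
      (summable_norm_thetaTerm 0 (2 * π * I * (u + v)) hτ2)
      (summable_norm_thetaTerm (1/2) (2 * π * I * (u - v)) hτ2)).congr_fun
      fun q => thetaTerm_mul_thetaTerm_odd τ u v q.1 q.2
  rw [jTheta_one_eq, jTheta_one_eq, jTheta_two_eq, jTheta_two_eq, jTheta_three_eq,
    jTheta_three_eq, neg_mul_neg, hprod.unique (heven.add_isCompl isCompl_compl hodd)]
  ring

/-- After `jTheta_one_mul_jTheta_one`, all six pair products involve `θ₂, θ₃` only at
`X + Y + p`, `X + Y + p + 2q` and `X - Y ± p`. -/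
theorem jTheta_one_fay {τ : ℂ} (hτ : 0 < τ.im) (X Y p q : ℂ) :
    jTheta 1 (X + p) τ * jTheta 1 (X + q) τ * jTheta 1 (Y + p + q) τ * jTheta 1 Y τ
      - jTheta 1 (X + p + q) τ * jTheta 1 X τ * jTheta 1 (Y + p) τ * jTheta 1 (Y + q) τ
      = jTheta 1 (X + Y + p + q) τ * jTheta 1 (X - Y) τ * jTheta 1 p τ * jTheta 1 (-q) τ := by
  calc _ = jTheta 1 (X + p) τ * jTheta 1 Y τ * (jTheta 1 (X + q) τ * jTheta 1 (Y + p + q) τ)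
        - jTheta 1 (X + p + q) τ * jTheta 1 (Y + q) τ * (jTheta 1 X τ * jTheta 1 (Y + p) τ) := by
          ring
    _ = jTheta 1 (X + Y + p + q) τ * jTheta 1 (-q) τ * (jTheta 1 (X - Y) τ * jTheta 1 p τ) := by
      simp only [jTheta_one_mul_jTheta_one hτ]
      ring_nf
    _ = _ := by ring

lemma prod_range_sub_eq_prod_range_add {M : Type*} [CommMonoid M] (g : ℤ → M) {a b : ℤ} {n : ℕ}
    (h : b + n = a + 1) : ∏ j ∈ range n, g (a - j) = ∏ j ∈ range n, g (b + j) := by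
  rw [← prod_range_reflect]
  exact prod_congr rfl fun j hj => congrArg g (by have := mem_range.mp hj; omega)

section ShiftedTheta

variable (τ η : ℂ)

noncomputable def thetaAt (w : ℂ) (m : ℤ) : ℂ := jTheta 1 (2 * w + 2 * m * η) τ

noncomputable def thetaBlock (w : ℂ) (a : ℤ) (n : ℕ) : ℂ := ∏ i ∈ range n, thetaAt τ η w (a + i)

/-- The factor of `A_k(z, λ)` depending on `z` alone; `A_k` is symmetric in `z` and `λ`. -/
noncomputable def Anum (ℓ k : ℕ) (w : ℂ) : ℂ :=
  thetaBlock τ η w (k + 1) (ℓ - k) * thetaBlock τ η w (-ℓ) k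

/-- The denominator of `A_k(z, λ)` as a function of `s = z + λ`: the `θ₁(2s + 2iη)`,
`k - ℓ ≤ i ≤ k`, except `i = 2k - ℓ`. -/
noncomputable def Aden (ℓ k : ℕ) (s : ℂ) : ℂ :=
  thetaBlock τ η s (k - ℓ) k * thetaBlock τ η s (2 * k - ℓ + 1) (ℓ - k)

/-- For `k < ℓ`, the common factor of `Anum ℓ k` and `Anum ℓ (k + 1)`. -/
noncomputable def AnumCore (ℓ k : ℕ) (w : ℂ) : ℂ :=
  thetaBlock τ η w (k + 2) (ℓ - k - 1) * thetaBlock τ η w (-ℓ) k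

/-- For `k < ℓ`, the common factor of `Aden ℓ k (s + η)` and `Aden ℓ (k + 1) (s - η)`. -/
noncomputable def AdenCore (ℓ k : ℕ) (s : ℂ) : ℂ :=
  thetaBlock τ η s (k - ℓ + 1) k * thetaBlock τ η s (2 * k - ℓ + 2) (ℓ - k - 1)

variable {τ η}

lemma thetaAt_zero (w : ℂ) : thetaAt τ η w 0 = jTheta 1 (2 * w) τ := by
  simp [thetaAt]

lemma thetaAt_natCast (w : ℂ) (ℓ : ℕ) : thetaAt τ η w ℓ = jTheta 1 (2 * w + 2 * ℓ * η) τ := rfl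

lemma thetaAt_neg_natCast (w : ℂ) (ℓ : ℕ) :
    thetaAt τ η w (-ℓ) = jTheta 1 (2 * w - 2 * ℓ * η) τ := by
  simp only [thetaAt]; push_cast; ring_nf

lemma thetaAt_add_eta (w : ℂ) (m : ℤ) : thetaAt τ η (w + η) m = thetaAt τ η w (m + 1) := by
  simp only [thetaAt]; push_cast; ring_nf

lemma thetaAt_sub_eta (w : ℂ) (m : ℤ) : thetaAt τ η (w - η) m = thetaAt τ η w (m - 1) := by
  simp only [thetaAt]; push_cast; ring_nf

lemma thetaBlock_add_eta {w : ℂ} {a b : ℤ} (h : a + 1 = b) (n : ℕ) :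
    thetaBlock τ η (w + η) a n = thetaBlock τ η w b n :=
  prod_congr rfl fun i _ => by rw [thetaAt_add_eta, ← h, add_right_comm]

lemma thetaBlock_sub_eta {w : ℂ} {a b : ℤ} (h : a - 1 = b) (n : ℕ) :
    thetaBlock τ η (w - η) a n = thetaBlock τ η w b n :=
  prod_congr rfl fun i _ => by rw [thetaAt_sub_eta, ← h, sub_add_eq_add_sub]

lemma thetaBlock_zero (w : ℂ) (a : ℤ) : thetaBlock τ η w a 0 = 1 := prod_range_zero _

lemma thetaBlock_succ {w : ℂ} {a b : ℤ} {n : ℕ} (h : a + n = b) :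
    thetaBlock τ η w a (n + 1) = thetaBlock τ η w a n * thetaAt τ η w b := by
  rw [thetaBlock, prod_range_succ, h]; rfl

lemma thetaBlock_succ' {w : ℂ} {a b : ℤ} {n : ℕ} (h : a + 1 = b) :
    thetaBlock τ η w a (n + 1) = thetaAt τ η w a * thetaBlock τ η w b n := by
  rw [thetaBlock, prod_range_succ', mul_comm, Nat.cast_zero, add_zero, thetaBlock]
  congr 1
  exact prod_congr rfl fun i _ => congrArg _ (by push_cast; omega)

variable {ℓ k : ℕ}

theorem Acoef_eq (hk : k ≤ ℓ) (z lam : ℂ) :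
    Acoef τ η ℓ k z lam = (-1) ^ k * (efac τ η ℓ / efac τ η (2 * ℓ)) * ebinom τ η ℓ k
      * (Anum τ η ℓ k z * Anum τ η ℓ k lam / Aden τ η ℓ k (z + lam)) := by
  have hupper : (∏ j ∈ range (ℓ - k),
      jTheta 1 (2*z + 2*((ℓ : ℂ) - (j : ℂ))*η) τ * jTheta 1 (2*lam + 2*((ℓ : ℂ) - (j : ℂ))*η) τ /
        jTheta 1 (2*z + 2*lam + 2*((k : ℂ) - (j : ℂ))*η) τ)
      = ∏ j ∈ range (ℓ - k), thetaAt τ η z (ℓ - j) * thetaAt τ η lam (ℓ - j)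
          / thetaAt τ η (z + lam) (k - j) :=
    prod_congr rfl fun j _ => by simp only [thetaAt]; push_cast; ring_nf
  have hlower : (∏ j ∈ range k,
      jTheta 1 (2*z - 2*((ℓ : ℂ) - (j : ℂ))*η) τ * jTheta 1 (2*lam - 2*((ℓ : ℂ) - (j : ℂ))*η) τ /
        jTheta 1 (2*z + 2*lam + 2*((k : ℂ) + (j : ℂ) - (ℓ : ℂ))*η) τ)
      = ∏ j ∈ range k, thetaAt τ η z (-ℓ + j) * thetaAt τ η lam (-ℓ + j)
          / thetaAt τ η (z + lam) (k - ℓ + j) :=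
    prod_congr rfl fun j _ => by simp only [thetaAt]; push_cast; ring_nf
  have hlen : ((k : ℤ) + 1) + (ℓ - k : ℕ) = ℓ + 1 := by omega
  have hlen' : (2 * k - ℓ + 1 : ℤ) + (ℓ - k : ℕ) = k + 1 := by omega
  rw [Acoef, mul_assoc _ (∏ j ∈ range (ℓ - k), _), hupper, hlower]
  simp only [prod_div_distrib, prod_mul_distrib, Anum, Aden, thetaBlock,
    prod_range_sub_eq_prod_range_add (thetaAt τ η z) hlen,
    prod_range_sub_eq_prod_range_add (thetaAt τ η lam) hlen,
    prod_range_sub_eq_prod_range_add (thetaAt τ η (z + lam)) hlen']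
  ring

lemma Acoef_comm (hk : k ≤ ℓ) (z lam : ℂ) :
    Acoef τ η ℓ k z lam = Acoef τ η ℓ k lam z := by
  rw [Acoef_eq hk, Acoef_eq hk, mul_comm (Anum τ η ℓ k z), add_comm z]

lemma Anum_eq_AnumCore_mul (hk : k < ℓ) (w : ℂ) :
    Anum τ η ℓ k w = AnumCore τ η ℓ k w * thetaAt τ η w (k + 1) := by
  rw [Anum, AnumCore]
  generalize hn : ℓ - k - 1 = n
  rw [show ℓ - k = n + 1 by omega, thetaBlock_succ' (b := k + 2) (by ring)]
  ring

lemma Anum_succ_eq_AnumCore_mul (w : ℂ) :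
    Anum τ η ℓ (k + 1) w = AnumCore τ η ℓ k w * thetaAt τ η w (k - ℓ) := by
  rw [Anum, AnumCore, thetaBlock_succ (b := k - ℓ) (by ring), Nat.sub_sub, Nat.cast_succ,
    add_assoc, one_add_one_eq_two]
  ring

lemma thetaAt_mul_Anum_add_eta (hk : k < ℓ) (w : ℂ) :
    thetaAt τ η w (-ℓ) * Anum τ η ℓ k (w + η)
      = AnumCore τ η ℓ k w * thetaAt τ η w (ℓ + 1) * thetaAt τ η w (k - ℓ) := by
  have hlow : thetaAt τ η w (-ℓ) * thetaBlock τ η w (-ℓ + 1) k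
      = thetaBlock τ η w (-ℓ) k * thetaAt τ η w (k - ℓ) := by
    rw [← thetaBlock_succ' rfl, thetaBlock_succ (b := k - ℓ) (by ring)]
  rw [Anum, AnumCore, thetaBlock_add_eta (b := k + 2) (by ring), thetaBlock_add_eta rfl]
  generalize hn : ℓ - k - 1 = n
  rw [show ℓ - k = n + 1 by omega, thetaBlock_succ (b := ℓ + 1) (by omega)]
  linear_combination (thetaBlock τ η w (k + 2) n * thetaAt τ η w (ℓ + 1)) * hlow

lemma thetaAt_mul_Anum_succ_sub_eta (hk : k < ℓ) (w : ℂ) :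
    thetaAt τ η w ℓ * Anum τ η ℓ (k + 1) (w - η)
      = AnumCore τ η ℓ k w * thetaAt τ η w (k + 1) * thetaAt τ η w (-ℓ - 1) := by
  have hup : thetaAt τ η w ℓ * thetaBlock τ η w (k + 1) (ℓ - k - 1)
      = thetaAt τ η w (k + 1) * thetaBlock τ η w (k + 2) (ℓ - k - 1) := by
    rw [mul_comm, ← thetaBlock_succ (by omega), thetaBlock_succ' (b := k + 2) (by ring)]
  rw [Anum, AnumCore, thetaBlock_sub_eta (b := k + 1) (by push_cast; ring),
    thetaBlock_sub_eta rfl, thetaBlock_succ' (b := -ℓ) (by ring), Nat.sub_sub]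
  linear_combination (thetaAt τ η w (-ℓ - 1) * thetaBlock τ η w (-ℓ) k) * hup

lemma Aden_add_eta (hk : k < ℓ) (w : ℂ) :
    Aden τ η ℓ k (w + η) = AdenCore τ η ℓ k w * thetaAt τ η w (k + 1) := by
  rw [Aden, AdenCore, thetaBlock_add_eta rfl, thetaBlock_add_eta (b := 2 * k - ℓ + 2) (by ring)]
  generalize hn : ℓ - k - 1 = n
  rw [show ℓ - k = n + 1 by omega, thetaBlock_succ (b := k + 1) (by omega)]
  ring

lemma Aden_succ_sub_eta (w : ℂ) :
    Aden τ η ℓ (k + 1) (w - η) = AdenCore τ η ℓ k w * thetaAt τ η w (k - ℓ) := by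
  rw [Aden, AdenCore, thetaBlock_sub_eta (b := k - ℓ) (by push_cast; ring),
    thetaBlock_sub_eta (b := 2 * k - ℓ + 2) (by push_cast; ring),
    thetaBlock_succ' (b := k - ℓ + 1) (by ring), Nat.sub_sub]
  ring

lemma efac_succ (n : ℕ) :
    efac τ η (n + 1) = efac τ η n * jTheta 1 (2 * ((n + 1 : ℕ) : ℂ) * η) τ := by
  rw [efac, prod_range_succ, Nat.cast_succ]; rfl

lemma ebinom_succ_mul (hk : k < ℓ) (h1 : jTheta 1 (2 * ((k + 1 : ℕ) : ℂ) * η) τ ≠ 0)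
    (h2 : jTheta 1 (2 * ((ℓ - k : ℕ) : ℂ) * η) τ ≠ 0) :
    ebinom τ η ℓ (k + 1) * jTheta 1 (2 * ((k + 1 : ℕ) : ℂ) * η) τ
      = ebinom τ η ℓ k * jTheta 1 (2 * ((ℓ - k : ℕ) : ℂ) * η) τ := by
  obtain ⟨n, hn⟩ : ∃ n, ℓ - k = n + 1 := ⟨ℓ - k - 1, by omega⟩
  rw [hn] at h2 ⊢
  rw [ebinom, ebinom, show ℓ - (k + 1) = n by omega, hn, efac_succ k, efac_succ n]
  calc _ = efac τ η ℓ * jTheta 1 (2 * ((k + 1 : ℕ) : ℂ) * η) τ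
        / (efac τ η k * efac τ η n * jTheta 1 (2 * ((k + 1 : ℕ) : ℂ) * η) τ) := by ring
    _ = efac τ η ℓ * jTheta 1 (2 * ((n + 1 : ℕ) : ℂ) * η) τ
        / (efac τ η k * efac τ η n * jTheta 1 (2 * ((n + 1 : ℕ) : ℂ) * η) τ) := by
      rw [mul_div_mul_right _ _ h1, mul_div_mul_right _ _ h2]
    _ = _ := by ring

lemma thetaAt_fay (hτ : 0 < τ.im) (z lam : ℂ) {a c b : ℤ} {p q : ℂ} (hb : a + c = b)
    (hp : 2 * a * η = p) (hq : -(2 * c * η) = q) :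
    thetaAt τ η z a * thetaAt τ η z c * thetaAt τ η lam b * thetaAt τ η lam 0
      - thetaAt τ η z b * thetaAt τ η z 0 * thetaAt τ η lam a * thetaAt τ η lam c
      = thetaAt τ η (z + lam) b * (jTheta 1 (2 * z - 2 * lam) τ * jTheta 1 p τ * jTheta 1 q τ) := by
  have h := jTheta_one_fay hτ (2 * z) (2 * lam) (2 * a * η) (2 * c * η)
  subst hb hp hq
  simp only [thetaAt]
  rw [← mul_assoc, ← mul_assoc]
  convert h using 3 <;> push_cast <;> ring_nf

lemma thetaAt_mul_Acoef_add_eta (hk : k < ℓ) (z lam : ℂ) :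
    thetaAt τ η z (-ℓ) * Acoef τ η ℓ k (z + η) lam
      = (-1) ^ k * (efac τ η ℓ / efac τ η (2 * ℓ)) * ebinom τ η ℓ k
        * (AnumCore τ η ℓ k z * AnumCore τ η ℓ k lam / AdenCore τ η ℓ k (z + lam))
        * (thetaAt τ η z (ℓ + 1) * thetaAt τ η z (k - ℓ) * thetaAt τ η lam (k + 1)
          / thetaAt τ η (z + lam) (k + 1)) := by
  rw [Acoef_eq hk.le, add_right_comm, Aden_add_eta hk, Anum_eq_AnumCore_mul hk lam]
  linear_combination ((-1) ^ k * (efac τ η ℓ / efac τ η (2 * ℓ)) * ebinom τ η ℓ k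
    * (AnumCore τ η ℓ k lam * thetaAt τ η lam (k + 1))
    / (AdenCore τ η ℓ k (z + lam) * thetaAt τ η (z + lam) (k + 1)))
    * thetaAt_mul_Anum_add_eta hk z

lemma thetaAt_mul_Acoef_succ_sub_eta (hk : k < ℓ) (z lam : ℂ) :
    thetaAt τ η z ℓ * Acoef τ η ℓ (k + 1) (z - η) lam
      = -((-1) ^ k * (efac τ η ℓ / efac τ η (2 * ℓ)) * ebinom τ η ℓ (k + 1)
        * (AnumCore τ η ℓ k z * AnumCore τ η ℓ k lam / AdenCore τ η ℓ k (z + lam))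
        * (thetaAt τ η z (k + 1) * thetaAt τ η z (-ℓ - 1) * thetaAt τ η lam (k - ℓ)
          / thetaAt τ η (z + lam) (k - ℓ))) := by
  rw [Acoef_eq (k := k + 1) hk, sub_add_eq_add_sub, Aden_succ_sub_eta,
    Anum_succ_eq_AnumCore_mul lam]
  linear_combination (-(-1) ^ k * (efac τ η ℓ / efac τ η (2 * ℓ)) * ebinom τ η ℓ (k + 1)
    * (AnumCore τ η ℓ k lam * thetaAt τ η lam (k - ℓ))
    / (AdenCore τ η ℓ k (z + lam) * thetaAt τ η (z + lam) (k - ℓ)))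
    * thetaAt_mul_Anum_succ_sub_eta hk z

theorem tq_coeff_interior (hτ : 0 < τ.im) (hk : k < ℓ) (z lam : ℂ)
    (hW₁ : thetaAt τ η (z + lam) (k + 1) ≠ 0) (hW₂ : thetaAt τ η (z + lam) (k - ℓ) ≠ 0)
    (hE₁ : jTheta 1 (2 * ((k + 1 : ℕ) : ℂ) * η) τ ≠ 0)
    (hE₂ : jTheta 1 (2 * ((ℓ - k : ℕ) : ℂ) * η) τ ≠ 0) :
    thetaAt τ η lam 0 * (thetaAt τ η z (-ℓ) * Acoef τ η ℓ k (z + η) lam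
        + thetaAt τ η z ℓ * Acoef τ η ℓ (k + 1) (z - η) lam)
      = thetaAt τ η z 0 * (thetaAt τ η lam (-ℓ) * Acoef τ η ℓ k z (lam + η)
        + thetaAt τ η lam ℓ * Acoef τ η ℓ (k + 1) z (lam - η)) := by
  have fay₁ := thetaAt_fay (η := η) hτ z lam (a := ℓ + 1) (c := k - ℓ) (b := k + 1)
    (p := 2 * ((ℓ + 1 : ℕ) : ℂ) * η) (q := 2 * ((ℓ - k : ℕ) : ℂ) * η) (by ring)
    (by push_cast; ring) (by push_cast [Nat.cast_sub hk.le]; ring)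
  have fay₂ := thetaAt_fay (η := η) hτ z lam (a := k + 1) (c := -ℓ - 1) (b := k - ℓ)
    (p := 2 * ((k + 1 : ℕ) : ℂ) * η) (q := 2 * ((ℓ + 1 : ℕ) : ℂ) * η) (by ring)
    (by push_cast; ring) (by push_cast; ring)
  replace fay₁ := (eq_div_of_mul_eq hW₁ ((mul_comm _ _).trans fay₁.symm)).symm
  replace fay₂ := (eq_div_of_mul_eq hW₂ ((mul_comm _ _).trans fay₂.symm)).symm
  rw [Acoef_comm hk.le z, Acoef_comm hk z, thetaAt_mul_Acoef_add_eta hk,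
    thetaAt_mul_Acoef_succ_sub_eta hk, thetaAt_mul_Acoef_add_eta hk,
    thetaAt_mul_Acoef_succ_sub_eta hk, add_comm lam z]
  set K := (-1) ^ k * (efac τ η ℓ / efac τ η (2 * ℓ))
    * (AnumCore τ η ℓ k z * AnumCore τ η ℓ k lam / AdenCore τ η ℓ k (z + lam))
  linear_combination K * ebinom τ η ℓ k * fay₁ - K * ebinom τ η ℓ (k + 1) * fay₂
    - K * jTheta 1 (2 * z - 2 * lam) τ * jTheta 1 (2 * ((ℓ + 1 : ℕ) : ℂ) * η) τ
      * ebinom_succ_mul hk hE₁ hE₂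

theorem tq_coeff_top (z lam : ℂ) :
    thetaAt τ η lam 0 * (thetaAt τ η z (-ℓ) * Acoef τ η ℓ ℓ (z + η) lam)
      = thetaAt τ η z 0 * (thetaAt τ η lam (-ℓ) * Acoef τ η ℓ ℓ z (lam + η)) := by
  have hshift (w : ℂ) :
      thetaAt τ η w (-ℓ) * Anum τ η ℓ ℓ (w + η) = Anum τ η ℓ ℓ w * thetaAt τ η w 0 := by
    simp only [Anum, Nat.sub_self, thetaBlock_zero, one_mul]
    rw [thetaBlock_add_eta rfl, ← thetaBlock_succ' rfl, thetaBlock_succ (b := 0) (by ring)]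
  rw [Acoef_comm le_rfl z, Acoef_eq le_rfl, Acoef_eq le_rfl,
    show z + η + lam = z + lam + η by ring, show lam + η + z = z + lam + η by ring]
  linear_combination
    ((-1) ^ ℓ * (efac τ η ℓ / efac τ η (2 * ℓ)) * ebinom τ η ℓ ℓ / Aden τ η ℓ ℓ (z + lam + η))
      * (thetaAt τ η lam 0 * Anum τ η ℓ ℓ lam * hshift z
        - thetaAt τ η z 0 * Anum τ η ℓ ℓ z * hshift lam)

theorem tq_coeff_bottom (z lam : ℂ) :
    thetaAt τ η lam 0 * (thetaAt τ η z ℓ * Acoef τ η ℓ 0 (z - η) lam)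
      = thetaAt τ η z 0 * (thetaAt τ η lam ℓ * Acoef τ η ℓ 0 z (lam - η)) := by
  have hshift (w : ℂ) :
      thetaAt τ η w ℓ * Anum τ η ℓ 0 (w - η) = Anum τ η ℓ 0 w * thetaAt τ η w 0 := by
    simp only [Anum, Nat.sub_zero, thetaBlock_zero, mul_one, Nat.cast_zero, zero_add]
    rw [thetaBlock_sub_eta (b := 0) (by ring), mul_comm, ← thetaBlock_succ (by ring),
      thetaBlock_succ' (b := 1) (by ring), mul_comm]
  rw [Acoef_comm (Nat.zero_le ℓ) z, Acoef_eq (Nat.zero_le ℓ), Acoef_eq (Nat.zero_le ℓ),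
    show z - η + lam = z + lam - η by ring, show lam - η + z = z + lam - η by ring]
  linear_combination
    (efac τ η ℓ / efac τ η (2 * ℓ) * ebinom τ η ℓ 0 / Aden τ η ℓ 0 (z + lam - η))
      * (thetaAt τ η lam 0 * Anum τ η ℓ 0 lam * hshift z
        - thetaAt τ η z 0 * Anum τ η ℓ 0 z * hshift lam)

end ShiftedTheta

lemma mul_sum_succ_add_mul_sum {R : Type*} [CommRing R] (α β : R) (u v g : ℕ → R) (n : ℕ) :
    α * ∑ k ∈ range (n + 1), u k * g (k + 1) + β * ∑ k ∈ range (n + 1), v k * g k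
      = ∑ k ∈ range n, (α * u k + β * v (k + 1)) * g (k + 1) + α * u n * g (n + 1)
        + β * v 0 * g 0 := by
  rw [sum_range_succ, sum_range_succ', mul_add, mul_add, mul_sum, mul_sum, ← add_assoc]
  simp only [add_mul, sum_add_distrib, mul_assoc]
  ring

/-- Baxter's T-Q relation for the one-site chain:
`T(λ)Q(λ)f = θ₁(2λ−2ℓη)·Q(λ+η)f + θ₁(2λ+2ℓη)·Q(λ−η)f`. -/
theorem one_site_TQ_relation (τ η lam : ℂ) (hτ : 0 < τ.im) (ℓ : ℕ)
    (hgen : ∀ j : ℕ, 1 ≤ j → j ≤ 2*ℓ → jTheta 1 (2*(j : ℂ)*η) τ ≠ 0)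
    (f : ℂ → ℂ) (z : ℂ) (hz : jTheta 1 (2*z) τ ≠ 0)
    (hden : ∀ c : ℤ, c.natAbs ≤ ℓ + 1 → jTheta 1 (2*z + 2*lam + 2*(c : ℂ)*η) τ ≠ 0) :
    TopOne τ η ℓ lam (Qop τ η ℓ lam f) z
      = jTheta 1 (2*lam - 2*(ℓ : ℂ)*η) τ * Qop τ η ℓ (lam + η) f z
        + jTheta 1 (2*lam + 2*(ℓ : ℂ)*η) τ * Qop τ η ℓ (lam - η) f z := by
  have hW (c : ℤ) (hc : c.natAbs ≤ ℓ + 1) : thetaAt τ η (z + lam) c ≠ 0 := by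
    simpa only [thetaAt, mul_add] using hden c hc
  let F (p : ℕ) : ℂ := f (z + lam + (2 * p - 1 - ℓ) * η)
  have hQ (w μ : ℂ) (e : ℕ) (h : w + μ = z + lam + (2 * e - 1) * η) :
      Qop τ η ℓ μ f w = ∑ k ∈ range (ℓ + 1), Acoef τ η ℓ k w μ * F (k + e) :=
    sum_congr rfl fun k _ => by
      simp only [F]; congr 2; push_cast; linear_combination h
  rw [TopOne, div_eq_iff hz, hQ (z + η) lam 1 (by ring), hQ (z - η) lam 0 (by ring),
    hQ z (lam + η) 1 (by ring), hQ z (lam - η) 0 (by ring), ← thetaAt_zero (η := η),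
    ← thetaAt_zero (η := η), ← thetaAt_natCast, ← thetaAt_natCast, ← thetaAt_neg_natCast,
    ← thetaAt_neg_natCast]
  simp only [Nat.add_zero]
  rw [mul_sum_succ_add_mul_sum, mul_sum_succ_add_mul_sum, mul_add, mul_add, mul_sum, add_mul,
    add_mul, sum_mul]
  refine congrArg₂ (· + ·) (congrArg₂ (· + ·) (sum_congr rfl fun k hk => ?_) ?_) ?_
  · have hk := mem_range.mp hk
    linear_combination F (k + 1) * tq_coeff_interior hτ hk z lam (hW _ (by omega))
      (hW _ (by omega)) (hgen _ (by omega) (by omega)) (hgen _ (by omega) (by omega))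
  · linear_combination F (ℓ + 1) * tq_coeff_top (ℓ := ℓ) z lam
  · linear_combination F 0 * tq_coeff_bottom (ℓ := ℓ) z lam
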